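/- arXiv:2312.11545 — 8 statements merged into one kernel-verified Lean document; each statement's English description precedes it below -/
import Mathlib

section
/- Let K ≥ 1 and let a, b : Fin K → ℝ. For w : ℝ define the softmax vector p(w) : Fin K → ℝ by p(w)(k) = exp(a k + w * b k) / ∑_j exp(a j + w * b j). Suppose kmax : Fin K satisfies b k ≤ b kmax for all k, and there exists k with b k < b kmax. Then the function w ↦ p(w)(kmax) is strictly monotone increasing on ℝ. -/
open Real Finset

theorem softmax_kmax_strictMono
    (K : ℕ) (hK : 1 ≤ K) (a b : Fin K → ℝ)
    (kmax : Fin K) (hmax : ∀ k, b k ≤ b kmax)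
    (hne : ∃ k, b k < b kmax) :
    StrictMono (fun w : ℝ =>
      Real.exp (a kmax + w * b kmax) / ∑ j, Real.exp (a j + w * b j)) := by
  intro w1 w2 hw
  have hpos : ∀ w : ℝ, 0 < ∑ j, Real.exp (a j + w * b j) := by
    intro w
    exact Finset.sum_pos (fun i _ => Real.exp_pos _)
      (Finset.univ_nonempty_iff.mpr ⟨kmax⟩)
  simp only
  rw [div_lt_div_iff₀ (hpos w1) (hpos w2), Finset.mul_sum, Finset.mul_sum]
  apply Finset.sum_lt_sum
  · intro j _
    rw [← Real.exp_add, ← Real.exp_add]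
    apply Real.exp_le_exp.mpr
    nlinarith [mul_nonneg (sub_nonneg.mpr hw.le) (sub_nonneg.mpr (hmax j))]
  · obtain ⟨k, hk⟩ := hne
    refine ⟨k, Finset.mem_univ k, ?_⟩
    rw [← Real.exp_add, ← Real.exp_add]
    apply Real.exp_lt_exp.mpr
    nlinarith [mul_pos (sub_pos.mpr hw) (sub_pos.mpr hk)]
end

section
/- Let K ≥ 1 and let a, b : Fin K → ℝ. For w : ℝ define the softmax vector p(w) : Fin K → ℝ by p(w)(k) = exp(a k + w * b k) / ∑_j exp(a j + w * b j). Suppose kmax : Fin K satisfies b k ≤ b kmax for all k, and there exists k with b k < b kmax. Then for every w : ℝ, the derivative of the function w ↦ p(w)(kmax) at w is strictly positive. -/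
/-! The derivative of `p(w)(k)` is `p(w)(k) · (b k - 𝔼_{p(w)}[b])`. Since every action has
positive probability and `b` is not constant, the mean `𝔼_{p(w)}[b]` lies strictly below
`b kmax`, so the derivative at `kmax` is positive. -/

open Real Finset

section Softmax

variable {ι : Type*} [Fintype ι]

theorem Finset.sum_mul_lt_mul_sum_of_le_of_exists_lt (b c : ι → ℝ) (hc : ∀ j, 0 < c j) {M : ℝ}
    (hle : ∀ j, b j ≤ M) (hlt : ∃ k, b k < M) : ∑ j, b j * c j < M * ∑ j, c j := by
  rw [Finset.mul_sum]
  obtain ⟨k, hk⟩ := hlt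
  exact Finset.sum_lt_sum (fun j _ => mul_le_mul_of_nonneg_right (hle j) (hc j).le)
    ⟨k, Finset.mem_univ k, mul_lt_mul_of_pos_right hk (hc k)⟩

theorem hasDerivAt_exp_add_mul (a b w : ℝ) :
    HasDerivAt (fun w => exp (a + w * b)) (b * exp (a + w * b)) w := by
  simpa [mul_comm] using (((hasDerivAt_id w).mul_const b).const_add a).exp

theorem hasDerivAt_sum_exp_add_mul (a b : ι → ℝ) (w : ℝ) :
    HasDerivAt (fun w => ∑ j, exp (a j + w * b j)) (∑ j, b j * exp (a j + w * b j)) w :=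
  HasDerivAt.fun_sum fun j _ => hasDerivAt_exp_add_mul (a j) (b j) w

theorem sum_exp_add_mul_pos [Nonempty ι] (a b : ι → ℝ) (w : ℝ) :
    0 < ∑ j, exp (a j + w * b j) :=
  Finset.sum_pos (fun _ _ => exp_pos _) Finset.univ_nonempty

theorem hasDerivAt_softmax [Nonempty ι] (a b : ι → ℝ) (k : ι) (w : ℝ) :
    HasDerivAt (fun w => exp (a k + w * b k) / ∑ j, exp (a j + w * b j))
      (exp (a k + w * b k) * (b k * ∑ j, exp (a j + w * b j) - ∑ j, b j * exp (a j + w * b j))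
        / (∑ j, exp (a j + w * b j)) ^ 2) w :=
  ((hasDerivAt_exp_add_mul (a k) (b k) w).div (hasDerivAt_sum_exp_add_mul a b w)
    (sum_exp_add_mul_pos a b w).ne').congr_deriv (by ring)

end Softmax

theorem softmax_kmax_deriv_pos_general
    (K : ℕ) (a b : Fin K → ℝ)
    (kmax : Fin K) (hmax : ∀ k, b k ≤ b kmax)
    (hne : ∃ k, b k < b kmax) :
    ∀ w : ℝ, 0 < deriv (fun w : ℝ =>
      Real.exp (a kmax + w * b kmax) / ∑ j, Real.exp (a j + w * b j)) w := by
  intro w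
  have : Nonempty (Fin K) := ⟨kmax⟩
  rw [(hasDerivAt_softmax a b kmax w).deriv]
  have hgap := Finset.sum_mul_lt_mul_sum_of_le_of_exists_lt b (fun j => exp (a j + w * b j))
    (fun j => exp_pos _) hmax hne
  exact div_pos (mul_pos (exp_pos _) (sub_pos.2 hgap)) (pow_pos (sum_exp_add_mul_pos a b w) 2)

theorem softmax_kmax_deriv_pos
    (K : ℕ) (hK : 1 ≤ K) (a b : Fin K → ℝ)
    (kmax : Fin K) (hmax : ∀ k, b k ≤ b kmax)
    (hne : ∃ k, b k < b kmax) :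
    ∀ w : ℝ, 0 < deriv (fun w : ℝ =>
      Real.exp (a kmax + w * b kmax) / ∑ j, Real.exp (a j + w * b j)) w :=
  softmax_kmax_deriv_pos_general K a b kmax hmax hne
end

section
/- Let K ≥ 1 and let a, b : Fin K → ℝ. For w : ℝ define the softmax vector p(w) : Fin K → ℝ by p(w)(k) = exp(a k + w * b k) / ∑_j exp(a j + w * b j). Suppose kmin : Fin K satisfies b kmin ≤ b k for all k, and there exists k with b kmin < b k. Then the function w ↦ p(w)(kmin) is strictly monotone decreasing (strictly antitone) on ℝ. -/
open Real Finset

theorem softmax_kmin_strictAnti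
    (K : ℕ) (hK : 1 ≤ K) (a b : Fin K → ℝ)
    (kmin : Fin K) (hmin : ∀ k, b kmin ≤ b k)
    (hne : ∃ k, b kmin < b k) :
    StrictAnti (fun w : ℝ =>
      Real.exp (a kmin + w * b kmin) / ∑ j, Real.exp (a j + w * b j)) := by
  intro w1 w2 hw
  have hSpos : ∀ w : ℝ, 0 < ∑ j, Real.exp (a j + w * b j) := fun w =>
    Finset.sum_pos (fun j _ => Real.exp_pos _) ⟨kmin, Finset.mem_univ _⟩
  dsimp only
  rw [div_lt_div_iff₀ (hSpos w2) (hSpos w1)]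
  rw [Finset.mul_sum, Finset.mul_sum]
  apply Finset.sum_lt_sum
  · intro j _
    rw [← Real.exp_add, ← Real.exp_add]
    apply Real.exp_le_exp.mpr
    have : (w2 - w1) * (b kmin - b j) ≤ 0 :=
      mul_nonpos_of_nonneg_of_nonpos (by linarith) (by linarith [hmin j])
    nlinarith
  · obtain ⟨k, hk⟩ := hne
    refine ⟨k, Finset.mem_univ _, ?_⟩
    rw [← Real.exp_add, ← Real.exp_add]
    apply Real.exp_lt_exp.mpr
    have : (w2 - w1) * (b kmin - b k) < 0 :=
      mul_neg_of_pos_of_neg (by linarith) (by linarith)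
    nlinarith
end

section
/- Let K ≥ 1 and let a, b : Fin K → ℝ, and suppose kmax : Fin K satisfies b k ≤ b kmax for all k. Define G : ℝ → ℝ by G(w) = ∑_k exp(w * (b k − b kmax)) * exp(a k − a kmax). If there exists k with b k < b kmax, then for every w : ℝ the derivative of G at w is strictly negative; explicitly, deriv G w = ∑_k (b k − b kmax) * exp(w * (b k − b kmax)) * exp(a k − a kmax) < 0. -/
open Real Finset

theorem hasDerivAt_sum_exp_mul_mul {ι : Type*} (s : Finset ι) (c d : ι → ℝ) (w : ℝ) :
    HasDerivAt (fun x => ∑ i ∈ s, exp (x * c i) * d i) (∑ i ∈ s, c i * exp (w * c i) * d i) w := by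
  refine HasDerivAt.fun_sum fun i _ => ?_
  have hlin : HasDerivAt (fun x => x * c i) (c i) w := by
    simpa using (hasDerivAt_id w).mul_const (c i)
  exact (hlin.exp.mul_const (d i)).congr_deriv (by ring)

theorem sum_mul_exp_mul_neg {ι : Type*} (s : Finset ι) (c d : ι → ℝ) (w : ℝ)
    (hc : ∀ i ∈ s, c i ≤ 0) (hd : ∀ i ∈ s, 0 < d i) (hneg : ∃ i ∈ s, c i < 0) :
    ∑ i ∈ s, c i * exp (w * c i) * d i < 0 := by
  obtain ⟨j, hjs, hj⟩ := hneg
  refine sum_neg' (fun i hi => ?_) ⟨j, hjs, ?_⟩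
  · exact mul_nonpos_of_nonpos_of_nonneg
      (mul_nonpos_of_nonpos_of_nonneg (hc i hi) (exp_pos _).le) (hd i hi).le
  · exact mul_neg_of_neg_of_pos (mul_neg_of_neg_of_pos hj (exp_pos _)) (hd j hjs)

theorem Gmax_deriv_neg_general
    (K : ℕ) (a b : Fin K → ℝ)
    (kmax : Fin K) (hmax : ∀ k, b k ≤ b kmax)
    (G : ℝ → ℝ)
    (hG : ∀ w : ℝ, G w = ∑ k, Real.exp (w * (b k - b kmax)) * Real.exp (a k - a kmax))
    (hne : ∃ k, b k < b kmax) :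
    ∀ w : ℝ,
      deriv G w = ∑ k, (b k - b kmax) * Real.exp (w * (b k - b kmax)) * Real.exp (a k - a kmax)
      ∧ deriv G w < 0 := by
  intro w
  have hderiv : deriv G w =
      ∑ k, (b k - b kmax) * exp (w * (b k - b kmax)) * exp (a k - a kmax) := by
    rw [funext hG]
    exact (hasDerivAt_sum_exp_mul_mul univ (fun k => b k - b kmax) (fun k => exp (a k - a kmax)) w).deriv
  refine ⟨hderiv, hderiv ▸ sum_mul_exp_mul_neg _ _ _ w ?_ (fun k _ => exp_pos _) ?_⟩
  · exact fun k _ => sub_nonpos.mpr (hmax k)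
  · obtain ⟨k, hk⟩ := hne
    exact ⟨k, mem_univ k, sub_neg.mpr hk⟩

theorem Gmax_deriv_neg
    (K : ℕ) (hK : 1 ≤ K) (a b : Fin K → ℝ)
    (kmax : Fin K) (hmax : ∀ k, b k ≤ b kmax)
    (G : ℝ → ℝ)
    (hG : ∀ w : ℝ, G w = ∑ k, Real.exp (w * (b k - b kmax)) * Real.exp (a k - a kmax))
    (hne : ∃ k, b k < b kmax) :
    ∀ w : ℝ,
      deriv G w = ∑ k, (b k - b kmax) * Real.exp (w * (b k - b kmax)) * Real.exp (a k - a kmax)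
      ∧ deriv G w < 0 :=
  Gmax_deriv_neg_general K a b kmax hmax G hG hne
end

section
/- Let K ≥ 1 and let a, b : Fin K → ℝ. For w : ℝ define the softmax vector p(w) : Fin K → ℝ by p(w)(k) = exp(a k + w * b k) / ∑_j exp(a j + w * b j). Suppose kmax : Fin K satisfies b k ≤ b kmax for all k, and there exists k with b k < b kmax. Then for every w > 0, p(w)(kmax) > p(0)(kmax). -/
open Real Finset

theorem softmax_kmax_increases
    (K : ℕ) (hK : 1 ≤ K) (a b : Fin K → ℝ)
    (kmax : Fin K) (hmax : ∀ k, b k ≤ b kmax)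
    (hne : ∃ k, b k < b kmax) :
    ∀ w : ℝ, 0 < w →
      Real.exp (a kmax + 0 * b kmax) / ∑ j, Real.exp (a j + 0 * b j)
        < Real.exp (a kmax + w * b kmax) / ∑ j, Real.exp (a j + w * b j) := by
  intro w hw
  obtain ⟨k0, hk0⟩ := hne
  have hS0 : (0:ℝ) < ∑ j, Real.exp (a j + 0 * b j) :=
    Finset.sum_pos (fun j _ => Real.exp_pos _) ⟨kmax, Finset.mem_univ _⟩
  have hSw : (0:ℝ) < ∑ j, Real.exp (a j + w * b j) :=
    Finset.sum_pos (fun j _ => Real.exp_pos _) ⟨kmax, Finset.mem_univ _⟩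
  rw [div_lt_div_iff₀ hS0 hSw]
  simp only [zero_mul, add_zero]
  have key : ∑ j, Real.exp (a j + w * b j) < ∑ j, Real.exp (a j + w * b kmax) := by
    apply Finset.sum_lt_sum
    · intro j _
      exact Real.exp_le_exp.mpr (by nlinarith [hmax j])
    · exact ⟨k0, Finset.mem_univ _, Real.exp_lt_exp.mpr (by nlinarith)⟩
  calc Real.exp (a kmax) * ∑ j, Real.exp (a j + w * b j)
      < Real.exp (a kmax) * ∑ j, Real.exp (a j + w * b kmax) := by
        exact mul_lt_mul_of_pos_left key (Real.exp_pos _)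
    _ = Real.exp (a kmax + w * b kmax) * ∑ j, Real.exp (a j) := by
        rw [Finset.mul_sum, Finset.mul_sum]
        apply Finset.sum_congr rfl
        intro j _
        rw [← Real.exp_add, ← Real.exp_add]
        ring_nf
end

section
/- Let K ≥ 1 and let a, b : Fin K → ℝ. For w : ℝ define the softmax vector p(w) : Fin K → ℝ by p(w)(k) = exp(a k + w * b k) / ∑_j exp(a j + w * b j). Suppose kmin : Fin K satisfies b kmin ≤ b k for all k, and there exists k with b kmin < b k. Then for every w > 0, p(w)(kmin) < p(0)(kmin). -/
open Real Finset

theorem softmax_kmin_decreases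
    (K : ℕ) (hK : 1 ≤ K) (a b : Fin K → ℝ)
    (kmin : Fin K) (hmin : ∀ k, b kmin ≤ b k)
    (hne : ∃ k, b kmin < b k) :
    ∀ w : ℝ, 0 < w →
      Real.exp (a kmin + w * b kmin) / ∑ j, Real.exp (a j + w * b j)
        < Real.exp (a kmin + 0 * b kmin) / ∑ j, Real.exp (a j + 0 * b j) := by
  intro w hw
  haveI : NeZero K := ⟨Nat.one_le_iff_ne_zero.mp hK⟩
  have hSw : (0:ℝ) < ∑ j, Real.exp (a j + w * b j) :=
    Finset.sum_pos (fun j _ => Real.exp_pos _) ⟨kmin, Finset.mem_univ _⟩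
  have hS0 : (0:ℝ) < ∑ j, Real.exp (a j + 0 * b j) :=
    Finset.sum_pos (fun j _ => Real.exp_pos _) ⟨kmin, Finset.mem_univ _⟩
  rw [div_lt_div_iff₀ hSw hS0, Finset.mul_sum, Finset.mul_sum]
  obtain ⟨k0, hk0⟩ := hne
  refine Finset.sum_lt_sum (fun j _ => ?_) ⟨k0, Finset.mem_univ _, ?_⟩
  · rw [← Real.exp_add, ← Real.exp_add, Real.exp_le_exp]
    nlinarith [hmin j]
  · rw [← Real.exp_add, ← Real.exp_add, Real.exp_lt_exp]
    nlinarith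
end

section
/- Let K ≥ 1 and let a, b : Fin K → ℝ. For w : ℝ define the softmax vector p(w) : Fin K → ℝ by p(w)(k) = exp(a k + w * b k) / ∑_j exp(a j + w * b j). Suppose kmax : Fin K satisfies b k ≤ b kmax for all k. Then the function w ↦ p(w)(kmax) is monotone nondecreasing on ℝ. -/
open Real Finset

theorem softmax_kmax_monotone
    (K : ℕ) (hK : 1 ≤ K) (a b : Fin K → ℝ)
    (kmax : Fin K) (hmax : ∀ k, b k ≤ b kmax) :
    Monotone (fun w : ℝ =>
      Real.exp (a kmax + w * b kmax) / ∑ j, Real.exp (a j + w * b j)) := by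
  haveI : NeZero K := ⟨by omega⟩
  have hS : ∀ w : ℝ, 0 < ∑ j, Real.exp (a j + w * b j) := fun w =>
    Finset.sum_pos (fun j _ => Real.exp_pos _) Finset.univ_nonempty
  intro w1 w2 h
  simp only
  rw [div_le_div_iff₀ (hS w1) (hS w2), Finset.mul_sum, Finset.mul_sum]
  apply Finset.sum_le_sum
  intro j _
  rw [← Real.exp_add, ← Real.exp_add]
  apply Real.exp_le_exp.mpr
  nlinarith [hmax j, mul_nonneg (sub_nonneg.mpr h) (sub_nonneg.mpr (hmax j))]
end

section
/- Let K ≥ 1 and let a, b : Fin K → ℝ. For w : ℝ define the softmax vector p(w) : Fin K → ℝ by p(w)(k) = exp(a k + w * b k) / ∑_j exp(a j + w * b j). Suppose kmin : Fin K satisfies b kmin ≤ b k for all k. Then the function w ↦ p(w)(kmin) is monotone nonincreasing (antitone) on ℝ. -/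
open Real Finset

theorem softmax_kmin_antitone
    (K : ℕ) (hK : 1 ≤ K) (a b : Fin K → ℝ)
    (kmin : Fin K) (hmin : ∀ k, b kmin ≤ b k) :
    Antitone (fun w : ℝ =>
      Real.exp (a kmin + w * b kmin) / ∑ j, Real.exp (a j + w * b j)) := by
  intro w1 w2 h
  have hS : ∀ w : ℝ, 0 < ∑ j, Real.exp (a j + w * b j) := by
    intro w
    apply Finset.sum_pos (fun j _ => Real.exp_pos _)
    exact ⟨kmin, Finset.mem_univ _⟩
  rw [div_le_div_iff₀ (hS w2) (hS w1), Finset.mul_sum, Finset.mul_sum]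
  apply Finset.sum_le_sum
  intro j _
  rw [← Real.exp_add, ← Real.exp_add, Real.exp_le_exp]
  nlinarith [hmin j]
end
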